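/- Let G be a locally compact, Hausdorff, second-countable ample étale groupoid. Then the relation ∼_G on C_c(G⁰, ℤ)⁺, defined by f ∼_G g iff there exist finitely many compact open bisections E₁, …, Eₙ ⊆ G with f = Σᵢ 1_{s(Eᵢ)} and g = Σᵢ 1_{r(Eᵢ)}, is an equivalence relation. -/

import Mathlib

open Set

/-- A (locally compact, Hausdorff, second-countable) étale groupoid structure on a
topological space `G`.  Multiplication is formalized as a total function whose groupoid
axioms are only imposed on composable pairs (those `(α, β)` with `s α = r β`). -/
structure EtaleGroupoid (G : Type*) [TopologicalSpace G] where
  unitSpace : Set G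
  r : G → G
  s : G → G
  mul : G → G → G
  inv : G → G
  r_mem : ∀ α, r α ∈ unitSpace
  s_mem : ∀ α, s α ∈ unitSpace
  r_unit : ∀ u ∈ unitSpace, r u = u
  s_unit : ∀ u ∈ unitSpace, s u = u
  r_mul : ∀ α β, s α = r β → r (mul α β) = r α
  s_mul : ∀ α β, s α = r β → s (mul α β) = s β
  mul_assoc' : ∀ α β γ, s α = r β → s β = r γ → mul (mul α β) γ = mul α (mul β γ)
  unit_mul : ∀ α, mul (r α) α = α
  mul_unit : ∀ α, mul α (s α) = α
  r_inv : ∀ α, r (inv α) = s α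
  s_inv : ∀ α, s (inv α) = r α
  mul_inv : ∀ α, mul α (inv α) = r α
  inv_mul : ∀ α, mul (inv α) α = s α
  /-- multiplication is continuous on the set of composable pairs -/
  continuousOn_mul : ContinuousOn (fun p : G × G => mul p.1 p.2) {p : G × G | s p.1 = r p.2}
  continuous_inv : Continuous inv
  /-- étale: the range map is a local homeomorphism onto the unit space -/
  isLocalHomeomorph_r : IsLocalHomeomorph fun α => (⟨r α, r_mem α⟩ : unitSpace)
  /-- étale: the source map is a local homeomorphism onto the unit space -/
  isLocalHomeomorph_s : IsLocalHomeomorph fun α => (⟨s α, s_mem α⟩ : unitSpace)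

namespace EtaleGroupoid

variable {G : Type*} [TopologicalSpace G] (𝒢 : EtaleGroupoid G)

/-- A bisection: a set on which both `r` and `s` are injective. -/
def IsBisection (E : Set G) : Prop := Set.InjOn 𝒢.r E ∧ Set.InjOn 𝒢.s E

def IsOpenBisection (E : Set G) : Prop := IsOpen E ∧ 𝒢.IsBisection E

def IsCompactOpenBisection (E : Set G) : Prop := IsCompact E ∧ IsOpen E ∧ 𝒢.IsBisection E

/-- `U` is an open subset of the unit space `G⁰` (in the subspace topology). -/
def IsUnitOpen (U : Set G) : Prop :=
  U ⊆ 𝒢.unitSpace ∧ ∃ V : Set G, IsOpen V ∧ U = V ∩ 𝒢.unitSpace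

/-- `U_E = r(EU) = {r α : α ∈ E, s α ∈ U}`. -/
def ranOn (E U : Set G) : Set G := 𝒢.r '' {α ∈ E | 𝒢.s α ∈ U}

/-- `G` is minimal if every orbit `r(Gu)` is dense in the unit space. -/
def Minimal : Prop :=
  ∀ u ∈ 𝒢.unitSpace, 𝒢.unitSpace ⊆ closure (𝒢.r '' {α | 𝒢.s α = u})

/-- `G` is ample if its topology has a basis of compact open bisections. -/
def Ample : Prop := ∀ (α : G) (V : Set G), IsOpen V → α ∈ V →
  ∃ E : Set G, 𝒢.IsCompactOpenBisection E ∧ α ∈ E ∧ E ⊆ V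

end EtaleGroupoid
namespace EtaleGroupoid

variable {G : Type*} [TopologicalSpace G] (𝒢 : EtaleGroupoid G)

/-- `C_c(G⁰, ℤ)⁺`: compactly supported functions that are continuous on the unit space,
vanish off the unit space, and take nonnegative values. -/
def CcPos : AddSubmonoid (G → ℤ) where
  carrier := {f | ContinuousOn f 𝒢.unitSpace ∧ (∀ x ∉ 𝒢.unitSpace, f x = 0) ∧
    HasCompactSupport f ∧ ∀ x, 0 ≤ f x}
  zero_mem' := ⟨continuousOn_const, fun _ _ => rfl, HasCompactSupport.zero, fun _ => le_refl 0⟩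
  add_mem' := fun hf hg =>
    ⟨hf.1.add hg.1, fun x hx => by simp [Pi.add_apply, hf.2.1 x hx, hg.2.1 x hx],
      hf.2.2.1.add hg.2.2.1, fun x => add_nonneg (hf.2.2.2 x) (hg.2.2.2 x)⟩

/-- The indicator function `1_{s(E)}`. -/
noncomputable def srcInd (E : Set G) : G → ℤ := Set.indicator (𝒢.s '' E) 1

/-- The indicator function `1_{r(E)}`. -/
noncomputable def ranInd (E : Set G) : G → ℤ := Set.indicator (𝒢.r '' E) 1

/-- The relation `f ∼_G g`: there are finitely many compact open bisections `E₁, …, Eₙ`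
with `f = Σᵢ 1_{s(Eᵢ)}` and `g = Σᵢ 1_{r(Eᵢ)}`. -/
def TypeRel (f g : G → ℤ) : Prop :=
  ∃ L : List (Set G), (∀ E ∈ L, 𝒢.IsCompactOpenBisection E) ∧
    f = (L.map 𝒢.srcInd).sum ∧ g = (L.map 𝒢.ranInd).sum

theorem typeRel_add {f₁ g₁ f₂ g₂ : G → ℤ} (h₁ : 𝒢.TypeRel f₁ g₁) (h₂ : 𝒢.TypeRel f₂ g₂) :
    𝒢.TypeRel (f₁ + f₂) (g₁ + g₂) := by
  obtain ⟨L, hL, hf, hg⟩ := h₁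
  obtain ⟨M, hM, hf', hg'⟩ := h₂
  refine ⟨L ++ M, ?_, ?_, ?_⟩
  · intro E hE
    rcases List.mem_append.mp hE with h | h
    exacts [hL E h, hM E h]
  · simp [hf, hf', List.sum_append]
  · simp [hg, hg', List.sum_append]

end EtaleGroupoid

/-!
A function in `C_c(G⁰, ℤ)⁺` is continuous, integer valued and bounded, so it is the sum of the
indicators of its level sets `{f > k}`; these are compact open subsets of `G⁰`, hence bisections
on which `r` and `s` are the identity, which gives reflexivity. Symmetry comes from replacing each
bisection `E` by `E⁻¹`. For transitivity, suppose `Σ 1_{r(Eᵢ)} = Σ 1_{s(Fⱼ)}`. Then `r(E₁)` is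
covered by the `s(Fⱼ)`; cutting `E₁` and `F₁` along the clopen set `r(E₁) ∩ s(F₁)` and composing
the matching pieces into one bisection `F₁' E₁'` moves part of `E₁` across, and an induction on
the number of bisections involved finishes the argument.
-/

open Function Topology

theorem IsOpenMap.continuousOn_invFunOn {X Y : Type*} [TopologicalSpace X] [TopologicalSpace Y]
    [Nonempty X] {p : X → Y} {F : Set X} (hp : IsOpenMap p) (hF : IsOpen F) (hinj : InjOn p F) :
    ContinuousOn (invFunOn p F) (p '' F) := by
  rw [continuousOn_iff']
  refine fun t ht => ⟨p '' (F ∩ t), hp _ (hF.inter ht), ?_⟩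
  ext x
  constructor
  · rintro ⟨hxt, α, hα, rfl⟩
    rw [mem_preimage, hinj.leftInvOn_invFunOn hα] at hxt
    exact ⟨⟨α, ⟨hα, hxt⟩, rfl⟩, α, hα, rfl⟩
  · rintro ⟨⟨α, ⟨hα, hαt⟩, rfl⟩, -⟩
    exact ⟨by rwa [mem_preimage, hinj.leftInvOn_invFunOn hα], α, hα, rfl⟩

theorem Set.InjOn.indicator_image_eq_add {α β M : Type*} [AddZeroClass M] {p : α → β}
    {E : Set α} (hp : InjOn p E) (V : Set α) (c : β → M) :
    (p '' E).indicator c = (p '' (E ∩ V)).indicator c + (p '' (E \ V)).indicator c := by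
  have hdisj : Disjoint (p '' (E ∩ V)) (p '' (E \ V)) :=
    disjoint_sdiff_inter.symm.image hp inter_subset_left sdiff_subset
  calc (p '' E).indicator c = (p '' (E ∩ V) ∪ p '' (E \ V)).indicator c := by
        rw [← image_union, inter_union_sdiff]
    _ = _ := indicator_union_of_disjoint hdisj c

theorem support_sum_indicator_image {α β : Type*} (p : α → β) (L : List (Set α)) :
    support (L.map fun E => (p '' E).indicator (1 : β → ℤ)).sum = ⋃ E ∈ L, p '' E := by
  induction L with
  | nil => simp
  | cons E L ih =>
    have hL : 0 ≤ (L.map fun E => (p '' E).indicator (1 : β → ℤ)).sum :=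
      List.sum_nonneg fun _ hf => by
        obtain ⟨E, -, rfl⟩ := List.mem_map.mp hf
        exact indicator_nonneg (fun _ _ => zero_le_one)
    have hE : 0 ≤ (p '' E).indicator (1 : β → ℤ) := indicator_nonneg (fun _ _ => zero_le_one)
    ext x
    have hx := Set.ext_iff.mp ih x
    simp only [mem_support, mem_iUnion₂, exists_prop, List.mem_cons, or_and_right, exists_or,
      exists_eq_left, List.map_cons, List.sum_cons, Pi.add_apply, ne_eq,
      add_eq_zero_iff_of_nonneg (hE x) (hL x), indicator_apply_eq_zero, Pi.one_apply,
      one_ne_zero] at hx ⊢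
    rw [← hx, not_and_or, imp_false, not_not]

theorem sum_range_ite_lt (N : ℕ) (m : ℤ) (hm : 0 ≤ m) :
    ((List.range N).map fun k : ℕ => if (k : ℤ) < m then (1 : ℤ) else 0).sum = min m N := by
  induction N with
  | zero => simpa using hm
  | succ n ih =>
    rw [List.range_succ, List.map_append, List.sum_append, ih]
    simp only [List.map_cons, List.map_nil, List.sum_cons, List.sum_nil]
    split_ifs <;> omega

theorem eq_sum_indicator_lt {X : Type*} (f : X → ℤ) (N : ℕ) (h0 : ∀ x, 0 ≤ f x)
    (hN : ∀ x, f x ≤ N) :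
    f = ((List.range N).map fun k : ℕ => {x | (k : ℤ) < f x}.indicator 1).sum := by
  funext x
  rw [Pi.list_sum_apply, List.map_map]
  have hterm : ∀ k : ℕ, {x | (k : ℤ) < f x}.indicator (1 : X → ℤ) x =
      if (k : ℤ) < f x then 1 else 0 := fun k => by simp [indicator_apply]
  simp only [comp_def, hterm]
  rw [sum_range_ite_lt N (f x) (h0 x), min_eq_left (hN x)]

namespace EtaleGroupoid

variable {G : Type*} [TopologicalSpace G] (𝒢 : EtaleGroupoid G)

theorem inv_mul_cancel_left {β α : G} (h : 𝒢.s β = 𝒢.r α) :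
    𝒢.mul (𝒢.inv β) (𝒢.mul β α) = α := by
  rw [← 𝒢.mul_assoc' _ _ _ (𝒢.s_inv β) h, 𝒢.inv_mul, h, 𝒢.unit_mul]

theorem mul_inv_cancel_left {β γ : G} (h : 𝒢.r β = 𝒢.r γ) :
    𝒢.mul β (𝒢.mul (𝒢.inv β) γ) = γ := by
  rw [← 𝒢.mul_assoc' _ _ _ (𝒢.r_inv β).symm ((𝒢.s_inv β).trans h), 𝒢.mul_inv, h, 𝒢.unit_mul]

theorem inv_inv (α : G) : 𝒢.inv (𝒢.inv α) = α := by
  have h := 𝒢.inv_mul_cancel_left (𝒢.s_inv α)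
  rwa [𝒢.inv_mul, ← 𝒢.r_inv α, ← 𝒢.s_inv (𝒢.inv α), 𝒢.mul_unit] at h

theorem continuous_r : Continuous 𝒢.r :=
  continuous_subtype_val.comp 𝒢.isLocalHomeomorph_r.continuous

theorem continuous_s : Continuous 𝒢.s :=
  continuous_subtype_val.comp 𝒢.isLocalHomeomorph_s.continuous

theorem isOpen_unitSpace : IsOpen 𝒢.unitSpace := by
  have hsection : IsOpenEmbedding (Subtype.val : 𝒢.unitSpace → G) :=
    𝒢.isLocalHomeomorph_s.isOpenEmbedding_of_comp
      (by convert IsOpenEmbedding.id; ext u; exact 𝒢.s_unit u u.2) continuous_subtype_val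
  simpa using hsection.isOpen_range

theorem isClosed_unitSpace [T2Space G] : IsClosed 𝒢.unitSpace := by
  have h : 𝒢.unitSpace = {α | 𝒢.r α = α} :=
    Set.ext fun α => ⟨𝒢.r_unit α, fun h => h ▸ 𝒢.r_mem α⟩
  rw [h]
  exact isClosed_eq 𝒢.continuous_r continuous_id

theorem isOpenMap_r : IsOpenMap 𝒢.r :=
  𝒢.isOpen_unitSpace.isOpenMap_subtype_val.comp 𝒢.isLocalHomeomorph_r.isOpenMap

theorem isOpenMap_s : IsOpenMap 𝒢.s :=
  𝒢.isOpen_unitSpace.isOpenMap_subtype_val.comp 𝒢.isLocalHomeomorph_s.isOpenMap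

variable {𝒢} {E F : Set G}

theorem IsCompactOpenBisection.mono (hE : 𝒢.IsCompactOpenBisection E) (hFE : F ⊆ E)
    (hFc : IsCompact F) (hFo : IsOpen F) : 𝒢.IsCompactOpenBisection F :=
  ⟨hFc, hFo, hE.2.2.1.mono hFE, hE.2.2.2.mono hFE⟩

theorem IsCompactOpenBisection.inter_isClopen (hE : 𝒢.IsCompactOpenBisection E) {V : Set G}
    (hV : IsClopen V) : 𝒢.IsCompactOpenBisection (E ∩ V) :=
  hE.mono inter_subset_left (hE.1.inter_right hV.isClosed) (hE.2.1.inter hV.isOpen)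

theorem IsCompactOpenBisection.diff_isClopen (hE : 𝒢.IsCompactOpenBisection E) {V : Set G}
    (hV : IsClopen V) : 𝒢.IsCompactOpenBisection (E \ V) :=
  hE.mono sdiff_subset (hE.1.diff hV.isOpen) (hE.2.1.sdiff hV.isClosed)

theorem IsCompactOpenBisection.isClopen_image_r [T2Space G] (hE : 𝒢.IsCompactOpenBisection E) :
    IsClopen (𝒢.r '' E) :=
  ⟨(hE.1.image 𝒢.continuous_r).isClosed, 𝒢.isOpenMap_r E hE.2.1⟩

theorem IsCompactOpenBisection.isClopen_image_s [T2Space G] (hE : 𝒢.IsCompactOpenBisection E) :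
    IsClopen (𝒢.s '' E) :=
  ⟨(hE.1.image 𝒢.continuous_s).isClosed, 𝒢.isOpenMap_s E hE.2.1⟩

theorem IsCompactOpenBisection.image_inv (hE : 𝒢.IsCompactOpenBisection E) :
    𝒢.IsCompactOpenBisection (𝒢.inv '' E) := by
  have hpre : 𝒢.inv '' E = 𝒢.inv ⁻¹' E :=
    congrFun (image_eq_preimage_of_inverse 𝒢.inv_inv 𝒢.inv_inv) E
  refine ⟨hE.1.image 𝒢.continuous_inv, hpre ▸ hE.2.1.preimage 𝒢.continuous_inv, ?_, ?_⟩
  · refine InjOn.image_of_comp ?_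
    rw [show 𝒢.r ∘ 𝒢.inv = 𝒢.s from funext 𝒢.r_inv]
    exact hE.2.2.2
  · refine InjOn.image_of_comp ?_
    rw [show 𝒢.s ∘ 𝒢.inv = 𝒢.r from funext 𝒢.s_inv]
    exact hE.2.2.1

theorem isCompactOpenBisection_of_subset_unitSpace (hEc : IsCompact E) (hEo : IsOpen E)
    (hE : E ⊆ 𝒢.unitSpace) : 𝒢.IsCompactOpenBisection E :=
  ⟨hEc, hEo, (injOn_id E).congr fun u hu => (𝒢.r_unit u (hE hu)).symm,
    (injOn_id E).congr fun u hu => (𝒢.s_unit u (hE hu)).symm⟩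

variable (𝒢)

theorem typeRel_zero : 𝒢.TypeRel 0 0 :=
  ⟨[], by simp, rfl, rfl⟩

@[simp]
theorem srcInd_empty : 𝒢.srcInd ∅ = 0 := by
  rw [srcInd, image_empty, indicator_empty']

@[simp]
theorem ranInd_empty : 𝒢.ranInd ∅ = 0 := by
  rw [ranInd, image_empty, indicator_empty']

theorem srcInd_of_subset_unitSpace (hE : E ⊆ 𝒢.unitSpace) : 𝒢.srcInd E = E.indicator 1 := by
  rw [srcInd, EqOn.image_eq_self fun u hu => 𝒢.s_unit u (hE hu)]

theorem ranInd_of_subset_unitSpace (hE : E ⊆ 𝒢.unitSpace) : 𝒢.ranInd E = E.indicator 1 := by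
  rw [ranInd, EqOn.image_eq_self fun u hu => 𝒢.r_unit u (hE hu)]

theorem srcInd_image_inv (E : Set G) : 𝒢.srcInd (𝒢.inv '' E) = 𝒢.ranInd E := by
  rw [srcInd, ranInd, ← image_comp, show 𝒢.s ∘ 𝒢.inv = 𝒢.r from funext 𝒢.s_inv]

theorem ranInd_image_inv (E : Set G) : 𝒢.ranInd (𝒢.inv '' E) = 𝒢.srcInd E := by
  rw [srcInd, ranInd, ← image_comp, show 𝒢.r ∘ 𝒢.inv = 𝒢.s from funext 𝒢.r_inv]

theorem srcInd_eq_add (hE : InjOn 𝒢.s E) (V : Set G) :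
    𝒢.srcInd E = 𝒢.srcInd (E ∩ V) + 𝒢.srcInd (E \ V) :=
  hE.indicator_image_eq_add V 1

theorem ranInd_eq_add (hE : InjOn 𝒢.r E) (V : Set G) :
    𝒢.ranInd E = 𝒢.ranInd (E ∩ V) + 𝒢.ranInd (E \ V) :=
  hE.indicator_image_eq_add V 1

theorem support_sum_srcInd (L : List (Set G)) :
    support (L.map 𝒢.srcInd).sum = ⋃ E ∈ L, 𝒢.s '' E :=
  support_sum_indicator_image 𝒢.s L

theorem support_sum_ranInd (L : List (Set G)) :
    support (L.map 𝒢.ranInd).sum = ⋃ E ∈ L, 𝒢.r '' E :=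
  support_sum_indicator_image 𝒢.r L

def mulSet (F E : Set G) : Set G :=
  (fun p : G × G => 𝒢.mul p.1 p.2) '' (F ×ˢ E ∩ {p | 𝒢.s p.1 = 𝒢.r p.2})

variable {𝒢}

theorem isCompact_mulSet [T2Space G] (hF : IsCompact F) (hE : IsCompact E) :
    IsCompact (𝒢.mulSet F E) :=
  ((hF.prod hE).inter_right (isClosed_eq (𝒢.continuous_s.comp continuous_fst)
    (𝒢.continuous_r.comp continuous_snd))).image_of_continuousOn
    (𝒢.continuousOn_mul.mono inter_subset_right)

theorem isOpen_mulSet (hF : IsOpen F) (hFr : InjOn 𝒢.r F) (hE : IsOpen E) :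
    IsOpen (𝒢.mulSet F E) := by
  rcases isEmpty_or_nonempty G with _ | _
  · exact (Subsingleton.elim (∅ : Set G) (𝒢.mulSet F E)) ▸ isOpen_empty
  set g := invFunOn 𝒢.r F
  have hg : ∀ γ ∈ 𝒢.r ⁻¹' (𝒢.r '' F), g (𝒢.r γ) ∈ F ∧ 𝒢.r (g (𝒢.r γ)) = 𝒢.r γ :=
    fun γ hγ => invFunOn_pos hγ
  -- `ψ` undoes left multiplication by `F`.
  let ψ : G → G := fun γ => 𝒢.mul (𝒢.inv (g (𝒢.r γ))) γ
  have hψ : ContinuousOn ψ (𝒢.r ⁻¹' (𝒢.r '' F)) := by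
    refine 𝒢.continuousOn_mul.comp (ContinuousOn.prodMk ?_ continuousOn_id) fun γ hγ => ?_
    · exact 𝒢.continuous_inv.comp_continuousOn
        ((𝒢.isOpenMap_r.continuousOn_invFunOn hF hFr).comp 𝒢.continuous_r.continuousOn
          fun γ hγ => hγ)
    · show 𝒢.s (𝒢.inv _) = 𝒢.r γ
      rw [𝒢.s_inv]
      exact (hg γ hγ).2
  have hmulSet : 𝒢.mulSet F E = 𝒢.r ⁻¹' (𝒢.r '' F) ∩ ψ ⁻¹' E := by
    ext γ
    constructor
    · rintro ⟨⟨β, α⟩, ⟨⟨hβ, hα⟩, hβα⟩, rfl⟩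
      have hrγ : 𝒢.r (𝒢.mul β α) = 𝒢.r β := 𝒢.r_mul β α hβα
      have hgβ : g (𝒢.r (𝒢.mul β α)) = β := by
        rw [hrγ]
        exact hFr.leftInvOn_invFunOn hβ
      refine ⟨⟨β, hβ, hrγ.symm⟩, ?_⟩
      show 𝒢.mul (𝒢.inv (g _)) _ ∈ E
      rwa [hgβ, 𝒢.inv_mul_cancel_left hβα]
    · rintro ⟨hγ, hψγ⟩
      obtain ⟨hβ, hrβ⟩ := hg γ hγ
      refine ⟨(g (𝒢.r γ), ψ γ), ⟨⟨hβ, hψγ⟩, ?_⟩, 𝒢.mul_inv_cancel_left hrβ⟩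
      show _ = 𝒢.r (𝒢.mul _ _)
      rw [𝒢.r_mul _ _ (by rw [𝒢.s_inv]; exact hrβ), 𝒢.r_inv]
  rw [hmulSet]
  exact hψ.isOpen_inter_preimage ((𝒢.isOpenMap_r F hF).preimage 𝒢.continuous_r) hE

theorem IsBisection.mulSet (hF : 𝒢.IsBisection F) (hE : 𝒢.IsBisection E) :
    𝒢.IsBisection (𝒢.mulSet F E) := by
  constructor
  · rintro _ ⟨⟨β, α⟩, ⟨⟨hβ, hα⟩, hβα⟩, rfl⟩ _ ⟨⟨β', α'⟩, ⟨⟨hβ', hα'⟩, hβα'⟩, rfl⟩ h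
    rw [𝒢.r_mul _ _ hβα, 𝒢.r_mul _ _ hβα'] at h
    obtain rfl := hF.1 hβ hβ' h
    obtain rfl := hE.1 hα hα' (hβα.symm.trans hβα')
    rfl
  · rintro _ ⟨⟨β, α⟩, ⟨⟨hβ, hα⟩, hβα⟩, rfl⟩ _ ⟨⟨β', α'⟩, ⟨⟨hβ', hα'⟩, hβα'⟩, rfl⟩ h
    rw [𝒢.s_mul _ _ hβα, 𝒢.s_mul _ _ hβα'] at h
    obtain rfl := hE.2 hα hα' h
    obtain rfl := hF.2 hβ hβ' (hβα.trans hβα'.symm)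
    rfl

theorem IsCompactOpenBisection.mulSet [T2Space G] (hF : 𝒢.IsCompactOpenBisection F)
    (hE : 𝒢.IsCompactOpenBisection E) : 𝒢.IsCompactOpenBisection (𝒢.mulSet F E) :=
  ⟨isCompact_mulSet hF.1 hE.1, isOpen_mulSet hF.2.1 hF.2.2.1 hE.2.1, hF.2.2.mulSet hE.2.2⟩

theorem image_s_mulSet (h : 𝒢.r '' E ⊆ 𝒢.s '' F) : 𝒢.s '' 𝒢.mulSet F E = 𝒢.s '' E := by
  refine Subset.antisymm ?_ ?_
  · rintro _ ⟨_, ⟨⟨β, α⟩, ⟨⟨-, hα⟩, hβα⟩, rfl⟩, rfl⟩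
    exact ⟨α, hα, (𝒢.s_mul β α hβα).symm⟩
  · rintro _ ⟨α, hα, rfl⟩
    obtain ⟨β, hβ, hβα⟩ := h ⟨α, hα, rfl⟩
    exact ⟨_, ⟨(β, α), ⟨⟨hβ, hα⟩, hβα⟩, rfl⟩, 𝒢.s_mul β α hβα⟩

theorem image_r_mulSet (h : 𝒢.s '' F ⊆ 𝒢.r '' E) : 𝒢.r '' 𝒢.mulSet F E = 𝒢.r '' F := by
  refine Subset.antisymm ?_ ?_
  · rintro _ ⟨_, ⟨⟨β, α⟩, ⟨⟨hβ, -⟩, hβα⟩, rfl⟩, rfl⟩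
    exact ⟨β, hβ, (𝒢.r_mul β α hβα).symm⟩
  · rintro _ ⟨β, hβ, rfl⟩
    obtain ⟨α, hα, hβα⟩ := h ⟨β, hβ, rfl⟩
    exact ⟨_, ⟨(β, α), ⟨⟨hβ, hα⟩, hβα.symm⟩, rfl⟩, 𝒢.r_mul β α hβα.symm⟩

theorem typeRel_srcInd_ranInd [T2Space G] (hE : 𝒢.IsCompactOpenBisection E)
    (hF : 𝒢.IsCompactOpenBisection F) (h : 𝒢.r '' E = 𝒢.s '' F) :
    𝒢.TypeRel (𝒢.srcInd E) (𝒢.ranInd F) :=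
  ⟨[𝒢.mulSet F E], by simpa using hF.mulSet hE, by simp [srcInd, image_s_mulSet h.subset],
    by simp [ranInd, image_r_mulSet h.symm.subset]⟩

theorem typeRel_sum_indicator {ι : Type*} {L : List ι} {U : ι → Set G}
    (hU : ∀ i ∈ L, IsCompact (U i) ∧ IsOpen (U i) ∧ U i ⊆ 𝒢.unitSpace) :
    𝒢.TypeRel (L.map fun i => (U i).indicator 1).sum (L.map fun i => (U i).indicator 1).sum := by
  refine ⟨L.map U, ?_, ?_, ?_⟩
  · simp only [List.mem_map]
    rintro _ ⟨i, hi, rfl⟩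
    obtain ⟨hc, ho, hsub⟩ := hU i hi
    exact isCompactOpenBisection_of_subset_unitSpace hc ho hsub
  · rw [List.map_map]
    exact congrArg List.sum (List.map_congr_left fun i hi =>
      (𝒢.srcInd_of_subset_unitSpace (hU i hi).2.2).symm)
  · rw [List.map_map]
    exact congrArg List.sum (List.map_congr_left fun i hi =>
      (𝒢.ranInd_of_subset_unitSpace (hU i hi).2.2).symm)

theorem TypeRel.symm {f g : G → ℤ} (h : 𝒢.TypeRel f g) : 𝒢.TypeRel g f := by
  obtain ⟨L, hL, rfl, rfl⟩ := h
  refine ⟨L.map (𝒢.inv '' ·), ?_, ?_, ?_⟩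
  · simp only [List.mem_map]
    rintro _ ⟨E, hE, rfl⟩
    exact (hL E hE).image_inv
  · simp only [List.map_map, comp_def, srcInd_image_inv]
  · simp only [List.map_map, comp_def, ranInd_image_inv]

theorem exists_typeRel_srcInd_of_image_r_subset [T2Space G] {M : List (Set G)}
    (hM : ∀ F ∈ M, 𝒢.IsCompactOpenBisection F) (hE : 𝒢.IsCompactOpenBisection E)
    (hEM : 𝒢.r '' E ⊆ ⋃ F ∈ M, 𝒢.s '' F) :
    ∃ (g : G → ℤ) (M' : List (Set G)), (∀ F ∈ M', 𝒢.IsCompactOpenBisection F) ∧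
      𝒢.TypeRel (𝒢.srcInd E) g ∧
      (M.map 𝒢.ranInd).sum = g + (M'.map 𝒢.ranInd).sum ∧
      (M.map 𝒢.srcInd).sum = 𝒢.ranInd E + (M'.map 𝒢.srcInd).sum := by
  induction M generalizing E with
  | nil =>
    obtain rfl : E = ∅ := by simpa using hEM
    exact ⟨0, [], by simp, by simpa using typeRel_zero 𝒢, by simp, by simp⟩
  | cons F M ih =>
    have hF := hM F List.mem_cons_self
    -- The pieces of `E` and `F` over `V` compose to a single bisection; the rest of `E`
    -- is handled by the sources of `M`.
    set V := 𝒢.r '' E ∩ 𝒢.s '' F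
    have hV : IsClopen V := hE.isClopen_image_r.inter hF.isClopen_image_s
    have hVr : IsClopen (𝒢.r ⁻¹' V) := hV.preimage 𝒢.continuous_r
    have hVs : IsClopen (𝒢.s ⁻¹' V) := hV.preimage 𝒢.continuous_s
    have hrE : 𝒢.r '' (E ∩ 𝒢.r ⁻¹' V) = V := by
      rw [image_inter_preimage, inter_eq_right.mpr inter_subset_left]
    have hsF : 𝒢.s '' (F ∩ 𝒢.s ⁻¹' V) = V := by
      rw [image_inter_preimage, inter_eq_right.mpr inter_subset_right]
    have hEM' : 𝒢.r '' (E \ 𝒢.r ⁻¹' V) ⊆ ⋃ X ∈ M, 𝒢.s '' X := by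
      rw [image_sdiff_preimage]
      rintro x ⟨hxE, hxV⟩
      obtain ⟨X, hX, hxX⟩ := mem_iUnion₂.mp (hEM hxE)
      rcases List.mem_cons.mp hX with rfl | hX
      · exact absurd ⟨hxE, hxX⟩ hxV
      · exact mem_iUnion₂.mpr ⟨X, hX, hxX⟩
    obtain ⟨g, M', hM', hEg, hran, hsrc⟩ :=
      ih (fun X hX => hM X (List.mem_cons_of_mem F hX)) (hE.diff_isClopen hVr) hEM'
    refine ⟨𝒢.ranInd (F ∩ 𝒢.s ⁻¹' V) + g, (F \ 𝒢.s ⁻¹' V) :: M', ?_, ?_, ?_, ?_⟩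
    · simp only [List.mem_cons, forall_eq_or_imp]
      exact ⟨hF.diff_isClopen hVs, hM'⟩
    · rw [𝒢.srcInd_eq_add hE.2.2.2 (𝒢.r ⁻¹' V)]
      exact 𝒢.typeRel_add (typeRel_srcInd_ranInd (hE.inter_isClopen hVr)
        (hF.inter_isClopen hVs) (hrE.trans hsF.symm)) hEg
    · rw [List.map_cons, List.sum_cons, List.map_cons, List.sum_cons, hran,
        𝒢.ranInd_eq_add hF.2.2.1 (𝒢.s ⁻¹' V)]
      abel
    · have hsrcF : 𝒢.srcInd (F ∩ 𝒢.s ⁻¹' V) = 𝒢.ranInd (E ∩ 𝒢.r ⁻¹' V) := by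
        rw [srcInd, ranInd, hsF, hrE]
      rw [List.map_cons, List.sum_cons, List.map_cons, List.sum_cons, hsrc,
        𝒢.srcInd_eq_add hF.2.2.2 (𝒢.s ⁻¹' V), hsrcF, 𝒢.ranInd_eq_add hE.2.2.1 (𝒢.r ⁻¹' V)]
      abel

theorem typeRel_of_sum_ranInd_eq_sum_srcInd [T2Space G] {L M : List (Set G)}
    (hL : ∀ E ∈ L, 𝒢.IsCompactOpenBisection E) (hM : ∀ F ∈ M, 𝒢.IsCompactOpenBisection F)
    (h : (L.map 𝒢.ranInd).sum = (M.map 𝒢.srcInd).sum) :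
    𝒢.TypeRel (L.map 𝒢.srcInd).sum (M.map 𝒢.ranInd).sum := by
  induction L generalizing M with
  | nil =>
    have hsrc : ⋃ F ∈ M, 𝒢.s '' F = ∅ := by
      rw [← support_sum_srcInd, ← h]
      simp
    have hran : ⋃ F ∈ M, 𝒢.r '' F = ∅ := by simpa using hsrc
    have : (M.map 𝒢.ranInd).sum = 0 := by
      rw [← support_eq_empty_iff, support_sum_ranInd, hran]
    simpa [this] using typeRel_zero 𝒢
  | cons E L ih =>
    have hEM : 𝒢.r '' E ⊆ ⋃ F ∈ M, 𝒢.s '' F := by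
      rw [← support_sum_srcInd, ← h, support_sum_ranInd]
      exact subset_biUnion_of_mem List.mem_cons_self
    obtain ⟨g, M', hM', hEg, hran, hsrc⟩ :=
      exists_typeRel_srcInd_of_image_r_subset hM (hL E List.mem_cons_self) hEM
    have h' : (L.map 𝒢.ranInd).sum = (M'.map 𝒢.srcInd).sum := by
      rw [List.map_cons, List.sum_cons] at h
      exact add_left_cancel (h.trans hsrc)
    rw [List.map_cons, List.sum_cons, hran]
    exact 𝒢.typeRel_add hEg (ih (fun X hX => hL X (List.mem_cons_of_mem E hX)) hM' h')

theorem TypeRel.trans [T2Space G] {f g h : G → ℤ} (hfg : 𝒢.TypeRel f g)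
    (hgh : 𝒢.TypeRel g h) : 𝒢.TypeRel f h := by
  obtain ⟨L, hL, rfl, hg⟩ := hfg
  obtain ⟨M, hM, hg', rfl⟩ := hgh
  exact typeRel_of_sum_ranInd_eq_sum_srcInd hL hM (hg.symm.trans hg')

theorem continuous_of_mem_ccPos [T2Space G] {f : G → ℤ} (hf : f ∈ 𝒢.CcPos) : Continuous f := by
  have hU : IsClopen 𝒢.unitSpace := ⟨𝒢.isClosed_unitSpace, 𝒢.isOpen_unitSpace⟩
  have hfU : 𝒢.unitSpace.indicator f = f :=
    indicator_eq_self.mpr fun x hx => by_contra fun h => hx (hf.2.1 x h)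
  rw [← hfU]
  refine continuous_indicator (by simp [hU.frontier_eq]) ?_
  rw [hU.isClosed.closure_eq]
  exact hf.1

theorem typeRel_refl [T2Space G] {f : G → ℤ} (hf : f ∈ 𝒢.CcPos) : 𝒢.TypeRel f f := by
  have hcont := 𝒢.continuous_of_mem_ccPos hf
  obtain ⟨-, hf_zero, hf_supp, hf_nonneg⟩ := hf
  obtain ⟨b, hb⟩ := hcont.bddAbove_range_of_hasCompactSupport hf_supp
  have hlevel : ∀ k : ℕ, IsCompact {x | (k : ℤ) < f x} ∧ IsOpen {x | (k : ℤ) < f x} ∧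
      {x | (k : ℤ) < f x} ⊆ 𝒢.unitSpace := by
    intro k
    have hpos : ∀ x ∈ {x | (k : ℤ) < f x}, f x ≠ 0 := fun x hx => by
      have : (k : ℤ) < f x := hx
      omega
    refine ⟨hf_supp.of_isClosed_subset ((isClosed_discrete _).preimage hcont)
      fun x hx => subset_tsupport f (hpos x hx), (isOpen_discrete _).preimage hcont,
      fun x hx => by_contra fun h => hpos x hx (hf_zero x h)⟩
  rw [eq_sum_indicator_lt f b.toNat hf_nonneg fun x => (hb ⟨x, rfl⟩).trans (Int.self_le_toNat b)]
  exact typeRel_sum_indicator fun k _ => hlevel k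

end EtaleGroupoid

theorem typeRel_equivalence_general {G : Type*} [TopologicalSpace G] [T2Space G]
    (𝒢 : EtaleGroupoid G) :
    Equivalence (fun f g : ↥𝒢.CcPos => 𝒢.TypeRel f.1 g.1) :=
  ⟨fun f => 𝒢.typeRel_refl f.2, EtaleGroupoid.TypeRel.symm, EtaleGroupoid.TypeRel.trans⟩

/-- For an ample étale groupoid `G`, the relation `∼_G` on
`C_c(G⁰, ℤ)⁺` — defined by `f ∼_G g` iff there are finitely many compact open bisections
`E₁, …, Eₙ` with `f = Σᵢ 1_{s(Eᵢ)}` and `g = Σᵢ 1_{r(Eᵢ)}` — is an equivalence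
relation. -/
theorem typeRel_equivalence {G : Type*} [TopologicalSpace G]
    [LocallyCompactSpace G] [T2Space G] [SecondCountableTopology G]
    (𝒢 : EtaleGroupoid G) (hample : 𝒢.Ample) :
    Equivalence (fun f g : ↥𝒢.CcPos => 𝒢.TypeRel f.1 g.1) :=
  typeRel_equivalence_general 𝒢
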